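/- Let λ ∈ ℤ_p. Then the following congruence of polynomials in ℤ_p[t, z₁,…,z_{2g+1}] holds modulo p^s: (∂/∂t)(E_s(pλt)·Φ_s^o(t,z)) ≡ pλ·E_s(pλt)·Φ_s^o(t,z) + ((p^s−1)/2)·Σ_{j=1}^{2g+1} E_s(pλt)·Φ_s^o(t,z)/(t−z_j) (mod p^s), where each Φ_s^o(t,z)/(t−z_j) is a polynomial. -/

import Mathlib

open MvPolynomial

/-- The truncation order `d(s) = ⌊s(p−1)/(p−2)⌋ + 1`. -/
def dTrunc (p s : ℕ) : ℕ := s * (p - 1) / (p - 2) + 1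

/-- `E_s(pλt)` as a polynomial in `t` over `ℚ_p[z₁,…,z_{2g+1}]`, for a fixed `λ ∈ ℤ_p`. -/
noncomputable def EsP (p : ℕ) [Fact p.Prime] (s g : ℕ) (lam : ℤ_[p]) :
    Polynomial (MvPolynomial (Fin (2 * g + 1)) ℚ_[p]) :=
  ∑ k ∈ Finset.range (dTrunc p s + 1),
    Polynomial.C (MvPolynomial.C ((p : ℚ_[p]) ^ k * (lam : ℚ_[p]) ^ k / (k.factorial : ℚ_[p]))) *
      Polynomial.X ^ k

/-- `Φ_s^o(t,z) = ∏_{i=1}^{2g+1}(t−z_i)^{(p^s−1)/2}` as a polynomial in `t` over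
`ℚ_p[z₁,…,z_{2g+1}]`. -/
noncomputable def PhiO (p : ℕ) [Fact p.Prime] (s g : ℕ) :
    Polynomial (MvPolynomial (Fin (2 * g + 1)) ℚ_[p]) :=
  ∏ i : Fin (2 * g + 1), (Polynomial.X - Polynomial.C (X i)) ^ ((p ^ s - 1) / 2)

/-- `Φ_s^o(t,z)/(t−z_j)`, a polynomial. -/
noncomputable def PhiODiv (p : ℕ) [Fact p.Prime] (s g : ℕ) (j : Fin (2 * g + 1)) :
    Polynomial (MvPolynomial (Fin (2 * g + 1)) ℚ_[p]) :=
  (Polynomial.X - Polynomial.C (X j)) ^ ((p ^ s - 1) / 2 - 1) *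
    ∏ i ∈ Finset.univ.erase j, (Polynomial.X - Polynomial.C (X i)) ^ ((p ^ s - 1) / 2)

/-- Derivative of the truncated exponential: `E_s'(pλt) = pλ·E_s(pλt) − (pλ)^{d+1}/d!·t^d`. -/
lemma EsP_derivative' (p : ℕ) [Fact p.Prime] (s g : ℕ) (lam : ℤ_[p]) :
    Polynomial.derivative (EsP p s g lam) =
      Polynomial.C (MvPolynomial.C ((p : ℚ_[p]) * (lam : ℚ_[p]))) * EsP p s g lam -
      Polynomial.C (MvPolynomial.C ((p : ℚ_[p]) ^ (dTrunc p s + 1) * (lam : ℚ_[p]) ^ (dTrunc p s + 1) /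
        ((dTrunc p s).factorial : ℚ_[p]))) * Polynomial.X ^ (dTrunc p s) := by
  set d := dTrunc p s with hd
  rw [EsP, map_sum, ← hd]
  have h1 : ∀ k : ℕ, Polynomial.derivative
      (Polynomial.C (MvPolynomial.C ((p : ℚ_[p]) ^ k * (lam : ℚ_[p]) ^ k / (k.factorial : ℚ_[p]))) *
        (Polynomial.X ^ k : Polynomial (MvPolynomial (Fin (2 * g + 1)) ℚ_[p]))) =
      Polynomial.C (MvPolynomial.C ((p : ℚ_[p]) ^ k * (lam : ℚ_[p]) ^ k / (k.factorial : ℚ_[p]) * (k : ℚ_[p]))) *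
        Polynomial.X ^ (k - 1) := by
    intro k
    rw [Polynomial.derivative_C_mul, Polynomial.derivative_X_pow,
      ← map_natCast (MvPolynomial.C : ℚ_[p] →+* MvPolynomial (Fin (2 * g + 1)) ℚ_[p]) k,
      ← mul_assoc, ← Polynomial.C_mul, ← MvPolynomial.C_mul]
  simp only [h1]
  rw [Finset.sum_range_succ' _ d]
  have h2 : ∀ k : ℕ,
      Polynomial.C (MvPolynomial.C ((p : ℚ_[p]) ^ (k+1) * (lam : ℚ_[p]) ^ (k+1) / ((k+1).factorial : ℚ_[p]) * ((k+1 : ℕ) : ℚ_[p]))) *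
        Polynomial.X ^ (k + 1 - 1) =
      Polynomial.C (MvPolynomial.C ((p : ℚ_[p]) * (lam : ℚ_[p]))) *
        (Polynomial.C (MvPolynomial.C ((p : ℚ_[p]) ^ k * (lam : ℚ_[p]) ^ k / (k.factorial : ℚ_[p]))) *
          (Polynomial.X ^ k : Polynomial (MvPolynomial (Fin (2 * g + 1)) ℚ_[p]))) := by
    intro k
    have hfac : ((k+1).factorial : ℚ_[p]) = ((k+1 : ℕ) : ℚ_[p]) * (k.factorial : ℚ_[p]) := by
      rw [Nat.factorial_succ]; push_cast; ring
    have hne : ((k+1 : ℕ) : ℚ_[p]) ≠ 0 := Nat.cast_ne_zero.mpr (Nat.succ_ne_zero k)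
    rw [← mul_assoc, ← Polynomial.C_mul, ← MvPolynomial.C_mul]
    congr 2
    rw [hfac, mul_comm ((k+1 : ℕ) : ℚ_[p]) (k.factorial : ℚ_[p]), ← div_div,
      div_mul_cancel₀ _ hne, pow_succ, pow_succ]
    ring
  simp only [h2]
  simp only [pow_zero, Nat.cast_zero, mul_zero, map_zero, Polynomial.C_0, zero_mul, add_zero]
  rw [← Finset.mul_sum]
  have htop : Polynomial.C (MvPolynomial.C ((p : ℚ_[p]) * (lam : ℚ_[p]))) *
      (Polynomial.C (MvPolynomial.C ((p : ℚ_[p]) ^ d * (lam : ℚ_[p]) ^ d / (d.factorial : ℚ_[p]))) *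
        (Polynomial.X ^ d : Polynomial (MvPolynomial (Fin (2 * g + 1)) ℚ_[p]))) =
      Polynomial.C (MvPolynomial.C ((p : ℚ_[p]) ^ (d + 1) * (lam : ℚ_[p]) ^ (d + 1) / (d.factorial : ℚ_[p]))) *
        Polynomial.X ^ d := by
    rw [← mul_assoc, ← Polynomial.C_mul, ← MvPolynomial.C_mul, pow_succ, pow_succ]
    ring_nf
  rw [Finset.sum_range_succ, mul_add, htop]
  ring

/-- Leibniz rule for a finite product of polynomials. -/
lemma derivative_finset_prod'' {R ι : Type*} [CommRing R] [DecidableEq ι] (s : Finset ι)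
    (f : ι → Polynomial R) :
    Polynomial.derivative (∏ i ∈ s, f i) =
      ∑ i ∈ s, (∏ j ∈ s.erase i, f j) * Polynomial.derivative (f i) := by
  induction s using Finset.induction_on with
  | empty => simp
  | insert a s' ha ih =>
    rw [Finset.prod_insert ha, Polynomial.derivative_mul, ih, Finset.sum_insert ha,
      Finset.erase_insert ha, Finset.mul_sum]
    congr 1
    · ring
    apply Finset.sum_congr rfl
    intro i hi
    rw [Finset.erase_insert_of_ne (by rintro rfl; exact ha hi),
      Finset.prod_insert (fun h => ha (Finset.mem_of_mem_erase h))]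
    ring

/-- Derivative of `Φ_s^o`: the exact Leibniz formula. -/
lemma PhiO_derivative' (p : ℕ) [Fact p.Prime] (s g : ℕ) :
    Polynomial.derivative (PhiO p s g) =
      Polynomial.C (MvPolynomial.C ((((p ^ s - 1) / 2 : ℕ) : ℚ_[p]))) *
        ∑ j : Fin (2 * g + 1), PhiODiv p s g j := by
  rw [PhiO, derivative_finset_prod'']
  rw [Finset.mul_sum]
  apply Finset.sum_congr rfl
  intro j _
  rw [Polynomial.derivative_pow, Polynomial.derivative_sub, Polynomial.derivative_X,
    Polynomial.derivative_C, sub_zero, mul_one, PhiODiv,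
    ← map_natCast (MvPolynomial.C : ℚ_[p] →+* MvPolynomial (Fin (2 * g + 1)) ℚ_[p]) ((p ^ s - 1) / 2)]
  ring

/-- The key arithmetic estimate: `v_p(d!) + s ≤ d + 1` for `d = dTrunc p s`. -/
lemma valfact_add_le' (p s : ℕ) [hp : Fact p.Prime] (hodd : Odd p) :
    padicValNat p (dTrunc p s).factorial + s ≤ dTrunc p s + 1 := by
  have hp3 : 3 ≤ p := by
    rcases hp.out.eq_two_or_odd' with h | _
    · exact absurd (h ▸ hodd) (by decide)
    · have := hp.out.two_le
      rcases Nat.lt_or_ge p 3 with h | h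
      · interval_cases p
        · exact absurd hodd (by decide)
      · exact h
  set m := s * (p - 1) / (p - 2) with hm
  set v := padicValNat p (dTrunc p s).factorial with hv
  have h1 : (p - 1) * v ≤ dTrunc p s := by
    rw [hv, sub_one_mul_padicValNat_factorial]
    omega
  have h2 : (p - 2) * m ≤ s * (p - 1) := by
    rw [hm, mul_comm]; exact Nat.div_mul_le_self _ _
  have h3 : s * (p - 1) < (p - 2) * m + (p - 2) := by
    have hdm := Nat.div_add_mod (s * (p - 1)) (p - 2)
    have hlt := Nat.mod_lt (s * (p - 1)) (y := p - 2) (by omega)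
    rw [hm]
    omega
  have hd : dTrunc p s = m + 1 := rfl
  rw [hd] at h1 ⊢
  obtain ⟨r, hr⟩ : ∃ r, p = r + 3 := ⟨p - 3, by omega⟩
  have e1 : p - 1 = r + 2 := by omega
  have e2 : p - 2 = r + 1 := by omega
  rw [e1] at h1
  rw [e2] at h3
  have key : (r + 2) * (v + s) < (r + 2) * (m + 2) := by nlinarith [h1, h3]
  have := Nat.lt_of_mul_lt_mul_left key
  omega

/-- The natural number `(p^s−1)/2` casts to `((p:ℚ_p)^s − 1)/2`. -/
lemma half_cast (p : ℕ) [hp : Fact p.Prime] (hodd : Odd p) (s : ℕ) :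
    ((((p ^ s - 1) / 2 : ℕ)) : ℚ_[p]) = ((p : ℚ_[p]) ^ s - 1) / 2 := by
  have hps : Odd (p ^ s) := hodd.pow
  have heven : 2 * ((p ^ s - 1) / 2) = p ^ s - 1 :=
    Nat.two_mul_div_two_of_even (Nat.Odd.sub_odd hps odd_one)
  have h1 : 1 ≤ p ^ s := Nat.one_le_pow _ _ hp.out.pos
  have hkey : (2 : ℚ_[p]) * (((p ^ s - 1) / 2 : ℕ) : ℚ_[p]) = (p : ℚ_[p]) ^ s - 1 := by
    rw [show (2 : ℚ_[p]) = ((2 : ℕ) : ℚ_[p]) by norm_num, ← Nat.cast_mul, heven]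
    push_cast [h1]
    ring
  have h2 : (2 : ℚ_[p]) ≠ 0 := two_ne_zero
  rw [eq_div_iff h2]
  linear_combination hkey

/-- Let `λ ∈ ℤ_p`. Then, modulo `p^s`,
`(∂/∂t)(E_s(pλt)·Φ_s^o(t,z)) ≡ pλ·E_s(pλt)·Φ_s^o(t,z) +
((p^s−1)/2)·Σ_{j=1}^{2g+1} E_s(pλt)·Φ_s^o(t,z)/(t−z_j)`
as polynomials in `t, z₁,…,z_{2g+1}`; the congruence means that every coefficient of the
difference lies in `p^s ℤ_p`. -/
theorem deriv_EsPhiO_mod_ps (p : ℕ) [Fact p.Prime] (hodd : Odd p)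
    (s g : ℕ) (hs : 0 < s) (hg : 0 < g) (lam : ℤ_[p]) :
    ∀ (n : ℕ) (mon : Fin (2 * g + 1) →₀ ℕ),
      ‖coeff mon
          ((Polynomial.derivative (EsP p s g lam * PhiO p s g) -
              (Polynomial.C (MvPolynomial.C ((p : ℚ_[p]) * (lam : ℚ_[p]))) *
                  (EsP p s g lam * PhiO p s g) +
                Polynomial.C (MvPolynomial.C (((p : ℚ_[p]) ^ s - 1) / 2)) *
                  ∑ j : Fin (2 * g + 1), EsP p s g lam * PhiODiv p s g j)).coeff n)‖ ≤
        (p : ℝ) ^ (-(s : ℤ)) := by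
  intro n mon
  set d := dTrunc p s with hdd
  set cval : ℚ_[p] := (p : ℚ_[p]) ^ (d + 1) * (lam : ℚ_[p]) ^ (d + 1) / (d.factorial : ℚ_[p])
    with hcval
  -- the exact algebraic identity
  have hident : Polynomial.derivative (EsP p s g lam * PhiO p s g) -
      (Polynomial.C (MvPolynomial.C ((p : ℚ_[p]) * (lam : ℚ_[p]))) *
          (EsP p s g lam * PhiO p s g) +
        Polynomial.C (MvPolynomial.C (((p : ℚ_[p]) ^ s - 1) / 2)) *
          ∑ j : Fin (2 * g + 1), EsP p s g lam * PhiODiv p s g j) =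
      -(Polynomial.C (MvPolynomial.C cval) * (Polynomial.X ^ d * PhiO p s g)) := by
    rw [Polynomial.derivative_mul, EsP_derivative' p s g lam, PhiO_derivative' p s g,
      half_cast p hodd s, ← Finset.mul_sum, ← hdd]
    ring
  rw [hident]
  -- compute the coefficient
  rw [Polynomial.coeff_neg, Polynomial.coeff_C_mul, MvPolynomial.coeff_neg,
    MvPolynomial.coeff_C_mul, norm_neg, norm_mul]
  -- the second factor has norm at most 1 (integral model over ℤ_p)
  have hint : Polynomial.X ^ d * PhiO p s g =
      Polynomial.map (MvPolynomial.map (PadicInt.Coe.ringHom (p := p)))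
        (Polynomial.X ^ d *
          ∏ i : Fin (2 * g + 1),
            (Polynomial.X - Polynomial.C (X i)) ^ ((p ^ s - 1) / 2)) := by
    simp [PhiO, Polynomial.map_mul, Polynomial.map_pow, Polynomial.map_prod,
      Polynomial.map_sub, Polynomial.map_X, Polynomial.map_C]
  have hcoe : ∀ z : ℤ_[p], ‖PadicInt.Coe.ringHom (p := p) z‖ ≤ 1 := by
    intro z
    rw [show PadicInt.Coe.ringHom (p := p) z = (z : ℚ_[p]) from rfl,
      PadicInt.padic_norm_e_of_padicInt]
    exact PadicInt.norm_le_one z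
  have hnorm2 : ‖coeff mon ((Polynomial.X ^ d * PhiO p s g).coeff n)‖ ≤ 1 := by
    rw [hint, Polynomial.coeff_map, MvPolynomial.coeff_map]
    exact hcoe _
  -- the constant has norm at most p^(-s)
  have hnorm1 : ‖cval‖ ≤ (p : ℝ) ^ (-(s : ℤ)) := by
    set v : ℕ := padicValNat p d.factorial with hvv
    set u : ℕ := d.factorial / p ^ v with huu
    have hfne : d.factorial ≠ 0 := d.factorial_ne_zero
    have hfacz : d.factorial = p ^ v * u := by
      rw [huu, hvv, ← Nat.factorization_def _ (Fact.out : p.Prime)]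
      exact (Nat.ordProj_mul_ordCompl_eq_self d.factorial p).symm
    have hu : ¬ (p : ℤ) ∣ (u : ℤ) := by
      rw [Int.natCast_dvd_natCast, huu, hvv, ← Nat.factorization_def _ (Fact.out : p.Prime)]
      exact Nat.not_dvd_ordCompl (Fact.out : p.Prime) hfne
    have hunorm : ‖((u : ℤ) : ℚ_[p])‖ = 1 :=
      le_antisymm (Padic.norm_int_le_one _)
        (le_of_not_gt fun h => hu (Padic.norm_intCast_lt_one_iff.1 h))
    have hfcast : ((d.factorial : ℕ) : ℚ_[p]) = (p : ℚ_[p]) ^ v * ((u : ℤ) : ℚ_[p]) := by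
      rw [hfacz]; push_cast; ring
    rw [hcval, norm_div, norm_mul, norm_pow, norm_pow, Padic.norm_p, hfcast, norm_mul,
      norm_pow, Padic.norm_p, hunorm, mul_one]
    have hlam : ‖(lam : ℚ_[p])‖ ≤ 1 := by
      rw [PadicInt.padic_norm_e_of_padicInt]; exact PadicInt.norm_le_one _
    have hppos : (0 : ℝ) < p := by exact_mod_cast (Fact.out : p.Prime).pos
    have hpinv : (0 : ℝ) < (p : ℝ)⁻¹ := by positivity
    have step1 : ((p : ℝ)⁻¹ ^ (d + 1) * ‖(lam : ℚ_[p])‖ ^ (d + 1)) / ((p : ℝ)⁻¹ ^ v) ≤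
        ((p : ℝ)⁻¹ ^ (d + 1)) / ((p : ℝ)⁻¹ ^ v) := by
      have hle := pow_le_one₀ (norm_nonneg (lam : ℚ_[p])) hlam (n := d + 1)
      have h1 : (p : ℝ)⁻¹ ^ (d + 1) * ‖(lam : ℚ_[p])‖ ^ (d + 1) ≤ (p : ℝ)⁻¹ ^ (d + 1) := by
        nlinarith [pow_nonneg (le_of_lt hpinv) (d + 1), pow_nonneg (norm_nonneg (lam : ℚ_[p])) (d + 1)]
      exact div_le_div_of_nonneg_right h1 (by positivity)
    have step2 : ((p : ℝ)⁻¹ ^ (d + 1)) / ((p : ℝ)⁻¹ ^ v) = (p : ℝ) ^ ((v : ℤ) - (d + 1)) := by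
      rw [← zpow_natCast ((p : ℝ)⁻¹) (d + 1), ← zpow_natCast ((p : ℝ)⁻¹) v,
        inv_zpow, inv_zpow, ← zpow_neg, ← zpow_neg, ← zpow_sub₀ (by positivity : (p : ℝ) ≠ 0)]
      congr 1
      push_cast
      ring
    have hexp : (v : ℤ) - (d + 1) ≤ -(s : ℤ) := by
      have hval := valfact_add_le' p s hodd
      rw [← hdd, ← hvv] at hval
      omega
    calc (p : ℝ)⁻¹ ^ (d + 1) * ‖(lam : ℚ_[p])‖ ^ (d + 1) / (p : ℝ)⁻¹ ^ v
        ≤ ((p : ℝ)⁻¹ ^ (d + 1)) / ((p : ℝ)⁻¹ ^ v) := step1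
      _ = (p : ℝ) ^ ((v : ℤ) - (d + 1)) := step2
      _ ≤ (p : ℝ) ^ (-(s : ℤ)) :=
          zpow_le_zpow_right₀ (by exact_mod_cast (Fact.out : p.Prime).one_lt.le) hexp
  calc ‖cval‖ * ‖coeff mon ((Polynomial.X ^ d * PhiO p s g).coeff n)‖
      ≤ (p : ℝ) ^ (-(s : ℤ)) * 1 :=
        mul_le_mul hnorm1 hnorm2 (norm_nonneg _) (by positivity)
    _ = (p : ℝ) ^ (-(s : ℤ)) := mul_one _
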